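/- arXiv:2303.17122 — 2 statements merged into one kernel-verified Lean document; each statement's English description precedes it below -/
import Mathlib

section
/- Let V be a real inner product space and J : V → V a linear map satisfying J² = −id and ⟨Ju, Jv⟩ = ⟨u, v⟩ for all u, v ∈ V. Define ω(u, v) = ⟨Ju, v⟩. Let W ⊆ V be a finite-dimensional subspace of dimension 2m. Then there exist an orthonormal basis e₁, …, e_{2m} of W and real numbers λ₁, …, λ_m with |λ_k| ≤ 1 for every k, such that ω(e_{2k−1}, e_{2k}) = λ_k for every k = 1, …, m, and ω(e_i, e_j) = 0 for every other pair i < j. -/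
/-!
Compressing `J` to `W` gives a skew-adjoint operator `T` on `W` with `⟪T x, y⟫ = ω x y`.
Since `-T²` is symmetric and positive semidefinite, a unit eigenvector `u` of `-T²` with
eigenvalue `μ² > 0` spans, together with `v = μ⁻¹ T u`, a `T`-invariant plane on which `T`
acts as the rotation `u ↦ μ v`, `v ↦ -μ u`. Skewness makes the orthogonal complement of that
plane `T`-invariant as well, so induction on `m` yields the block normal form. The bound
`|λ_k| ≤ 1` is Cauchy–Schwarz, as `J` is an isometry.
-/

open Module Submodule
open scoped RealInnerProductSpace

section Skew

variable {E : Type*} [NormedAddCommGroup E] [InnerProductSpace ℝ E] {T : E →ₗ[ℝ] E}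

theorem orthogonal_le_comap_of_skew (hT : ∀ x y, ⟪T x, y⟫ = -⟪x, T y⟫) {U : Submodule ℝ E}
    (hU : U ≤ U.comap T) : Uᗮ ≤ Uᗮ.comap T := fun w hw x hx => by
  rw [← neg_eq_zero, ← hT]
  exact hw _ (hU hx)

theorem isSymmetric_neg_comp_self (hT : ∀ x y, ⟪T x, y⟫ = -⟪x, T y⟫) :
    (-(T ∘ₗ T)).IsSymmetric := fun x y => by
  simp only [LinearMap.neg_apply, LinearMap.comp_apply, inner_neg_left, inner_neg_right, hT,
    neg_neg]

theorem exists_eigenvector_neg_comp_self_of_ne_zero [FiniteDimensional ℝ E]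
    (hT : ∀ x y, ⟪T x, y⟫ = -⟪x, T y⟫) (hT0 : T ≠ 0) :
    ∃ u : E, ‖u‖ = 1 ∧ T u ≠ 0 ∧ T (T u) = -(‖T u‖ ^ 2 • u) := by
  have hS := isSymmetric_neg_comp_self hT
  let b := hS.eigenvectorBasis rfl
  obtain ⟨i, hi⟩ : ∃ i, T (b i) ≠ 0 := by
    by_contra! h
    exact hT0 (b.toBasis.ext fun i => by simpa using h i)
  have hSb : -(T (T (b i))) = hS.eigenvalues rfl i • b i := by
    simpa using hS.apply_eigenvectorBasis rfl i
  have hc : hS.eigenvalues rfl i = ‖T (b i)‖ ^ 2 := by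
    have := congrArg (⟪·, b i⟫) hSb
    rw [inner_neg_left, hT, neg_neg, real_inner_smul_left, real_inner_self_eq_norm_sq,
      real_inner_self_eq_norm_sq, b.orthonormal.norm_eq_one] at this
    simpa using this.symm
  refine ⟨b i, b.orthonormal.norm_eq_one i, hi, ?_⟩
  rw [← hc, ← hSb, neg_neg]

theorem exists_orthonormal_pair_rotation [FiniteDimensional ℝ E]
    (hT : ∀ x y, ⟪T x, y⟫ = -⟪x, T y⟫) (hE : 2 ≤ finrank ℝ E) :
    ∃ (u v : E) (μ : ℝ), Orthonormal ℝ ![u, v] ∧ T u = μ • v ∧ T v = -(μ • u) := by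
  by_cases hT0 : T = 0
  · have hb := (stdOrthonormalBasis ℝ E).orthonormal
    refine ⟨stdOrthonormalBasis ℝ E ⟨0, by omega⟩, stdOrthonormalBasis ℝ E ⟨1, by omega⟩, 0,
      ?_, by simp [hT0], by simp [hT0]⟩
    simp [hb.norm_eq_one, hb.inner_eq_zero]
  obtain ⟨u, hu, hTu, hTTu⟩ := exists_eigenvector_neg_comp_self_of_ne_zero hT hT0
  have hμ : ‖T u‖ ≠ 0 := norm_ne_zero_iff.mpr hTu
  have hu_Tu : ⟪u, T u⟫ = 0 := by
    have := hT u u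
    rw [real_inner_comm] at this
    linarith
  refine ⟨u, ‖T u‖⁻¹ • T u, ‖T u‖, ?_, by rw [smul_inv_smul₀ hμ], ?_⟩
  · simp [hu, norm_smul, hμ, real_inner_smul_right, hu_Tu]
  · rw [map_smul, hTTu, smul_neg, smul_smul]
    congr 2
    field_simp

theorem inner_map_vecCons_eq_zero_of_div_two_ne (hT : ∀ x y, ⟪T x, y⟫ = -⟪x, T y⟫)
    {u v : E} {μ : ℝ} (hTu : T u = μ • v) (hTv : T v = -(μ • u)) (huv : ⟪u, v⟫ = 0)
    {n : ℕ} {w : Fin n → E} (hu : ∀ k, ⟪u, w k⟫ = 0) (hv : ∀ k, ⟪v, w k⟫ = 0)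
    (hw : ∀ k l : Fin n, (k : ℕ) / 2 ≠ (l : ℕ) / 2 → ⟪T (w k), w l⟫ = 0)
    (i j : Fin (n + 2)) (hij : (i : ℕ) / 2 ≠ (j : ℕ) / 2) :
    ⟪T (Matrix.vecCons u (Matrix.vecCons v w) i), Matrix.vecCons u (Matrix.vecCons v w) j⟫ = 0 := by
  have hTw_u (k) : ⟪T (w k), u⟫ = 0 := by
    rw [hT, hTu, real_inner_smul_right, real_inner_comm, hv, mul_zero, neg_zero]
  have hTw_v (k) : ⟪T (w k), v⟫ = 0 := by
    rw [hT, hTv, inner_neg_right, real_inner_smul_right, real_inner_comm, hu, mul_zero, neg_zero,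
      neg_zero]
  induction i using Fin.cases with
  | zero =>
    induction j using Fin.cases with
    | zero => simp [hTu, real_inner_smul_left, real_inner_comm u v, huv]
    | succ j => induction j using Fin.cases with
      | zero => simp at hij
      | succ l => simp [hTu, real_inner_smul_left, hv]
  | succ i => induction i using Fin.cases with
    | zero =>
      induction j using Fin.cases with
      | zero => simp at hij
      | succ j => induction j using Fin.cases with
        | zero => simp [hTv, real_inner_smul_left, huv]
        | succ l => simp [hTv, real_inner_smul_left, hu]
    | succ k =>
      induction j using Fin.cases with
      | zero => simp [hTw_u]
      | succ j => induction j using Fin.cases with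
        | zero => simp [hTw_v]
        | succ l =>
          simp only [Matrix.cons_val_succ]
          exact hw k l (by simp only [Fin.val_succ] at hij; omega)

theorem exists_orthonormalBasis_inner_map_eq_zero_of_div_two_ne [FiniteDimensional ℝ E]
    (hT : ∀ x y, ⟪T x, y⟫ = -⟪x, T y⟫) (m : ℕ) (hE : finrank ℝ E = 2 * m) :
    ∃ b : OrthonormalBasis (Fin (2 * m)) ℝ E,
      ∀ i j : Fin (2 * m), (i : ℕ) / 2 ≠ (j : ℕ) / 2 → ⟪T (b i), b j⟫ = 0 := by
  induction m generalizing E with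
  | zero => exact ⟨(stdOrthonormalBasis ℝ E).reindex (finCongr hE), fun i => i.elim0⟩
  | succ m ih =>
    obtain ⟨u, v, μ, huv, hTu, hTv⟩ := exists_orthonormal_pair_rotation hT (by omega)
    set U := span ℝ (Set.range ![u, v])
    have hu : u ∈ U := subset_span ⟨0, rfl⟩
    have hv : v ∈ U := subset_span ⟨1, rfl⟩
    have hU : U ≤ U.comap T := span_le.mpr <| Set.range_subset_iff.mpr <| Fin.forall_fin_two.mpr
      ⟨by simpa [hTu] using U.smul_mem μ hv, by simpa [hTv] using U.smul_mem μ hu⟩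
    have hrank : finrank ℝ Uᗮ = 2 * m := by
      have := U.finrank_add_finrank_orthogonal
      rw [finrank_span_eq_card huv.linearIndependent, Fintype.card_fin] at this
      omega
    obtain ⟨b', hb'⟩ := ih (T := T.restrict (orthogonal_le_comap_of_skew hT hU))
      (fun x y => hT x y) hrank
    have hu' (k) : ⟪u, b' k⟫ = 0 := inner_right_of_mem_orthogonal hu (b' k).2
    have hv' (k) : ⟪v, b' k⟫ = 0 := inner_right_of_mem_orthogonal hv (b' k).2
    let e : Fin (2 * (m + 1)) → E := Matrix.vecCons u (Matrix.vecCons v fun k => b' k)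
    have he : Orthonormal ℝ e := by
      simp only [e, orthonormal_vecCons_iff]
      exact ⟨huv.norm_eq_one 0, Fin.cases (huv.inner_eq_zero zero_ne_one) hu',
        huv.norm_eq_one 1, hv', b'.orthonormal.comp_linearIsometry Uᗮ.subtypeₗᵢ⟩
    refine ⟨OrthonormalBasis.mk he
      (he.linearIndependent.span_eq_top_of_card_eq_finrank' (by simp [hE])).ge, ?_⟩
    rw [OrthonormalBasis.coe_mk]
    exact inner_map_vecCons_eq_zero_of_div_two_ne hT hTu hTv (huv.inner_eq_zero zero_ne_one)
      hu' hv' hb'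

end Skew

/-- Let `V` be a real inner product space and `J : V → V` a linear map
with `J² = -id` and `⟨Ju, Jv⟩ = ⟨u, v⟩`; set `ω (u, v) = ⟨Ju, v⟩`.  If `W ⊆ V` is a
finite-dimensional subspace of dimension `2m`, then there are an orthonormal basis
`e₀, …, e_{2m-1}` of `W` and reals `λ₁, …, λ_m` with `|λ_k| ≤ 1`, such that
`ω (e_{2k}, e_{2k+1}) = λ_k` for each `k` (0-indexed pairs), and `ω (e_i, e_j) = 0` for
every other pair `i < j`. -/
theorem exists_orthonormalBasis_omega_normal_form
    {V : Type*} [NormedAddCommGroup V] [InnerProductSpace ℝ V]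
    (J : V →ₗ[ℝ] V)
    (hJ2 : ∀ v : V, J (J v) = -v)
    (hJc : ∀ u v : V, (inner ℝ (J u) (J v) : ℝ) = inner ℝ u v)
    (ω : V → V → ℝ)
    (hω : ∀ u v : V, ω u v = inner ℝ (J u) v)
    (m : ℕ) (W : Submodule ℝ V) [FiniteDimensional ℝ W]
    (hW : Module.finrank ℝ W = 2 * m) :
    ∃ (b : OrthonormalBasis (Fin (2 * m)) ℝ W) (lam : Fin m → ℝ),
      (∀ k : Fin m, |lam k| ≤ 1) ∧
      (∀ k : Fin m,
        ω (b ⟨2 * (k : ℕ), by have := k.isLt; omega⟩ : W)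
          (b ⟨2 * (k : ℕ) + 1, by have := k.isLt; omega⟩ : W) = lam k) ∧
      (∀ i j : Fin (2 * m), i < j →
        (¬ ∃ k : Fin m, (i : ℕ) = 2 * (k : ℕ) ∧ (j : ℕ) = 2 * (k : ℕ) + 1) →
        ω (b i : W) (b j : W) = 0) := by
  have hJ_skew (x y : V) : ⟪J x, y⟫ = -⟪x, J y⟫ := by
    rw [← hJc (J x) y, hJ2, inner_neg_left]
  let T : W →ₗ[ℝ] W := W.orthogonalProjectionOnto.toLinearMap ∘ₗ J ∘ₗ W.subtype
  have hT (x y : W) : ⟪T x, y⟫ = ω x y := by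
    rw [hω]
    exact inner_orthogonalProjectionOnto_eq_of_mem_right y (J x)
  have hT_skew (x y : W) : ⟪T x, y⟫ = -⟪x, T y⟫ := by
    rw [real_inner_comm (T y) x, hT, hT, hω, hω, hJ_skew, real_inner_comm]
  have hJ_norm (x : V) : ‖J x‖ = ‖x‖ := (J.isometryOfInner hJc).norm_map x
  obtain ⟨b, hb⟩ := exists_orthonormalBasis_inner_map_eq_zero_of_div_two_ne hT_skew m hW
  have hω_le (i j) : |ω (b i) (b j)| ≤ 1 :=
    calc |ω (b i) (b j)| = |⟪J (b i), (b j : V)⟫| := by rw [hω]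
      _ ≤ ‖J (b i)‖ * ‖(b j : V)‖ := abs_real_inner_le_norm _ _
      _ = 1 := by
        rw [hJ_norm, norm_coe, norm_coe,
          b.orthonormal.norm_eq_one, b.orthonormal.norm_eq_one, mul_one]
  refine ⟨b, fun k => ω (b _) (b _), fun k => hω_le _ _, fun k => rfl, fun i j hij hnp => ?_⟩
  rw [← hT]
  exact hb i j fun h => hnp ⟨⟨i / 2, by omega⟩, by dsimp only; omega, by dsimp only; omega⟩
end

section
/- Let V be a real inner product space, J : V → V a linear map with J² = −id and ⟨Ju, Jv⟩ = ⟨u, v⟩ for all u, v, and ω(u, v) = ⟨Ju, v⟩. Let W ⊆ V be a 2m-dimensional subspace and let e₁, …, e_{2m} be an orthonormal basis of W such that ω(e_{2k−1}, e_{2k}) = λ_k for k = 1, …, m and ω(e_i, e_j) = 0 for all other pairs i < j. Then the m-fold exterior power ω^m of the restriction of ω to W, evaluated on (e₁, …, e_{2m}), equals m! · λ₁ ⋯ λ_m. -/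
/-- The `m`-fold wedge power `ω^m = ω ∧ ⋯ ∧ ω` of a 2-form `ω`, evaluated on a tuple of
`2m` vectors, given by the usual alternating sum over permutations:
`(ω^m)(v₁, …, v_{2m}) = (1/2^m) ∑_{σ ∈ S_{2m}} sign σ · ∏_{k=1}^m ω(v_{σ(2k-1)}, v_{σ(2k)})`. -/
noncomputable def omegaPow {V : Type*} (m : ℕ) (ω : V → V → ℝ)
    (v : Fin (2 * m) → V) : ℝ :=
  (∑ σ : Equiv.Perm (Fin (2 * m)), ((Equiv.Perm.sign σ : ℤ) : ℝ) *
    ∏ k : Fin m,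
      ω (v (σ ⟨2 * (k : ℕ), by have := k.isLt; omega⟩))
        (v (σ ⟨2 * (k : ℕ) + 1, by have := k.isLt; omega⟩))) / 2 ^ m

/-! Index `Fin (2m)` by pairs `(k, i) ∈ Fin m × Fin 2`. Since `ω` vanishes between different
pairs, a permutation contributes to the alternating sum only if it maps pairs onto pairs, i.e. it
is a shear `(k, i) ↦ (π k, s_k i)` with `π ∈ S_m` and `s_k ∈ S_2`. Each of these `m! 2^m`
permutations contributes exactly `∏ λ_k`: a swap inside a pair changes both the sign and the
value of the antisymmetric `ω` on that pair, while `π`, acting on both halves at once, is even. -/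

section

open Equiv Finset

variable {ι β R : Type*}

theorem Equiv.Perm.sign_prodShear [Fintype ι] [DecidableEq ι] [Fintype β] [DecidableEq β]
    (π : Perm ι) (s : ι → Perm β) :
    Perm.sign (prodShear π s) = Perm.sign π ^ Fintype.card β * ∏ k, Perm.sign (s k) := by
  have hshear : (prodShear π s : Perm (ι × β)) = prodCongrLeft (fun _ => π) * prodCongrRight s :=
    Equiv.ext fun _ => rfl
  rw [hshear, map_mul, Perm.sign_prodCongrLeft, Perm.sign_prodCongrRight, prod_const, card_univ]

theorem prodShear_injective [Nonempty β] :
    Function.Injective fun p : Perm ι × (ι → Perm β) => (prodShear p.1 p.2 : Perm (ι × β)) := by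
  rintro ⟨π, s⟩ ⟨π', s'⟩ h
  have happ (k : ι) (i : β) : (π k, s k i) = (π' k, s' k i) := Equiv.congr_fun h (k, i)
  simp only [Prod.mk.injEq] at happ ⊢
  exact ⟨Equiv.ext fun k => (happ k (Classical.arbitrary β)).1,
    funext fun k => Equiv.ext fun i => (happ k i).2⟩

theorem Equiv.Perm.fin_two_eq_one_or_eq_swap (t : Perm (Fin 2)) : t = 1 ∨ t = swap 0 1 := by
  revert t; decide

theorem apply_perm_fin_two_eq_sign_mul [CommRing R] {f : Fin 2 → Fin 2 → R} (hf : f 1 0 = -f 0 1)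
    (t : Perm (Fin 2)) : f (t 0) (t 1) = (Perm.sign t : ℤ) * f 0 1 := by
  rcases t.fin_two_eq_one_or_eq_swap with rfl | rfl
  · simp
  · simp [hf]

theorem exists_prodShear_eq [Finite ι] (τ : Perm (ι × Fin 2))
    (hτ : ∀ k, (τ (k, 1)).1 = (τ (k, 0)).1) :
    ∃ p : Perm ι × (ι → Perm (Fin 2)), prodShear p.1 p.2 = τ := by
  have hfst (k : ι) (i : Fin 2) : (τ (k, i)).1 = (τ (k, 0)).1 := by
    fin_cases i
    · rfl
    · exact hτ k
  have hinj (k : ι) : Function.Injective fun i => (τ (k, i)).2 := fun i j hij =>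
    (Prod.ext_iff.mp (τ.injective (Prod.ext ((hfst k i).trans (hfst k j).symm) hij))).2
  have hbij (k : ι) := Finite.injective_iff_bijective.mp (hinj k)
  let π : ι → ι := fun k => (τ (k, 0)).1
  -- the fibre over `π k` is filled by `τ (k, ·)`, so no other `k'` can be sent there
  have hπ : Function.Injective π := by
    intro k k' hkk'
    obtain ⟨i, hi⟩ := (hbij k).2 (τ (k', 0)).2
    have : τ (k, i) = τ (k', 0) := Prod.ext ((hfst k i).trans hkk') hi
    exact (Prod.ext_iff.mp (τ.injective this)).1
  refine ⟨(Equiv.ofBijective π (Finite.injective_iff_bijective.mp hπ),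
    fun k => Equiv.ofBijective _ (hbij k)), Equiv.ext fun ⟨k, i⟩ => ?_⟩
  exact Prod.ext (hfst k i).symm rfl

theorem sign_mul_prod_prodShear_apply [Fintype ι] [DecidableEq ι] [CommRing R]
    {f : ι × Fin 2 → ι × Fin 2 → R} (hswap : ∀ k, f (k, 1) (k, 0) = -f (k, 0) (k, 1))
    (π : Perm ι) (s : ι → Perm (Fin 2)) :
    (Perm.sign (prodShear π s) : ℤ) * ∏ k, f (prodShear π s (k, 0)) (prodShear π s (k, 1)) =
      ∏ k, f (k, 0) (k, 1) := by
  have hblock (k : ι) :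
      f (π k, s k 0) (π k, s k 1) = (Perm.sign (s k) : ℤ) * f (π k, 0) (π k, 1) :=
    apply_perm_fin_two_eq_sign_mul (f := fun i j => f (π k, i) (π k, j)) (hswap _) (s k)
  simp only [prodShear_apply, hblock, Perm.sign_prodShear, Fintype.card_fin, Int.units_sq,
    one_mul, prod_mul_distrib, ← mul_assoc]
  rw [Units.coe_prod, Int.cast_prod, ← prod_mul_distrib]
  simp only [← Int.cast_mul, ← Units.val_mul, Int.units_mul_self, Units.val_one, Int.cast_one,
    prod_const_one, one_mul]
  exact Equiv.prod_comp π fun k => f (k, 0) (k, 1)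

theorem sum_sign_mul_prod_of_blockDiagonal [Fintype ι] [DecidableEq ι] [CommRing R]
    (f : ι × Fin 2 → ι × Fin 2 → R) (hoff : ∀ x y, x.1 ≠ y.1 → f x y = 0)
    (hswap : ∀ k, f (k, 1) (k, 0) = -f (k, 0) (k, 1)) :
    ∑ τ : Perm (ι × Fin 2), (Perm.sign τ : ℤ) * ∏ k, f (τ (k, 0)) (τ (k, 1)) =
      ((Fintype.card ι).factorial * 2 ^ Fintype.card ι : ℕ) * ∏ k, f (k, 0) (k, 1) := by
  have hvanish (τ : Perm (ι × Fin 2))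
      (hτ : τ ∉ Set.range fun p : Perm ι × (ι → Perm (Fin 2)) => prodShear p.1 p.2) :
      (Perm.sign τ : ℤ) * ∏ k, f (τ (k, 0)) (τ (k, 1)) = (0 : R) := by
    obtain ⟨k, hk⟩ : ∃ k, (τ (k, 1)).1 ≠ (τ (k, 0)).1 := by
      by_contra! h
      exact hτ (exists_prodShear_eq τ h)
    exact mul_eq_zero_of_right _ (prod_eq_zero (mem_univ k) (hoff _ _ hk.symm))
  rw [← Fintype.sum_of_injective _ prodShear_injective _ _ hvanish
      fun p => (sign_mul_prod_prodShear_apply hswap p.1 p.2).symm,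
    sum_const, card_univ, Fintype.card_prod, Fintype.card_perm, Fintype.card_fun,
    Fintype.card_perm, Fintype.card_fin, Nat.factorial_two, nsmul_eq_mul]

def finPairEquiv (m : ℕ) : Fin m × Fin 2 ≃ Fin (2 * m) :=
  finProdFinEquiv.trans (finCongr (Nat.mul_comm m 2))

@[simp]
theorem finPairEquiv_apply_val {m : ℕ} (x : Fin m × Fin 2) :
    (finPairEquiv m x : ℕ) = 2 * x.1 + x.2 := by
  simp [finPairEquiv, Nat.add_comm]

theorem finPairEquiv_apply_zero {m : ℕ} (k : Fin m) :
    finPairEquiv m (k, 0) = ⟨2 * (k : ℕ), by omega⟩ :=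
  Fin.ext (by simp)

theorem finPairEquiv_apply_one {m : ℕ} (k : Fin m) :
    finPairEquiv m (k, 1) = ⟨2 * (k : ℕ) + 1, by omega⟩ :=
  Fin.ext (by simp)

theorem omegaPow_eq_sum_perm_prod {V : Type*} (m : ℕ) (ω : V → V → ℝ) (v : Fin (2 * m) → V) :
    omegaPow m ω v = (∑ τ : Perm (Fin m × Fin 2), (Perm.sign τ : ℤ) *
      ∏ k, ω (v (finPairEquiv m (τ (k, 0)))) (v (finPairEquiv m (τ (k, 1))))) / 2 ^ m := by
  rw [omegaPow]
  congr 1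
  refine (Fintype.sum_equiv (finPairEquiv m).permCongr _ _ fun τ => ?_).symm
  simp [Perm.sign_permCongr, Equiv.permCongr_apply, ← finPairEquiv_apply_zero,
    ← finPairEquiv_apply_one]

theorem omegaPow_eq_factorial_mul_prod_of_blockDiagonal {V : Type*} {m : ℕ} (ω : V → V → ℝ)
    (v : Fin (2 * m) → V)
    (hoff : ∀ x y : Fin m × Fin 2, x.1 ≠ y.1 → ω (v (finPairEquiv m x)) (v (finPairEquiv m y)) = 0)
    (hswap : ∀ k : Fin m, ω (v (finPairEquiv m (k, 1))) (v (finPairEquiv m (k, 0))) =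
      -ω (v (finPairEquiv m (k, 0))) (v (finPairEquiv m (k, 1)))) :
    omegaPow m ω v = m.factorial *
      ∏ k : Fin m, ω (v (finPairEquiv m (k, 0))) (v (finPairEquiv m (k, 1))) := by
  rw [omegaPow_eq_sum_perm_prod, sum_sign_mul_prod_of_blockDiagonal _ hoff hswap, Fintype.card_fin]
  field_simp
  push_cast
  ring

theorem real_inner_apply_left_antisymm {V : Type*} [NormedAddCommGroup V] [InnerProductSpace ℝ V]
    (J : V → V) (hJ2 : ∀ v, J (J v) = -v) (hJc : ∀ u v, inner ℝ (J u) (J v) = inner ℝ u v)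
    (u v : V) : inner ℝ (J u) v = -inner ℝ (J v) u := by
  rw [← hJc (J u) v, hJ2, inner_neg_left, real_inner_comm]

end

/-- Let `V` be a real inner product space and `J` a compatible almost
complex structure, `ω (u, v) = ⟨Ju, v⟩`.  Let `W ⊆ V` be a `2m`-dimensional subspace with
an orthonormal basis `e₀, …, e_{2m-1}` such that `ω (e_{2k}, e_{2k+1}) = λ_k` and
`ω (e_i, e_j) = 0` for all other pairs `i < j`.  Then
`ω^m (e₀, …, e_{2m-1}) = m! · λ₁ ⋯ λ_m`. -/
theorem omegaPow_eq_factorial_mul_prod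
    {V : Type*} [NormedAddCommGroup V] [InnerProductSpace ℝ V]
    (J : V →ₗ[ℝ] V)
    (hJ2 : ∀ v : V, J (J v) = -v)
    (hJc : ∀ u v : V, (inner ℝ (J u) (J v) : ℝ) = inner ℝ u v)
    (ω : V → V → ℝ)
    (hω : ∀ u v : V, ω u v = inner ℝ (J u) v)
    (m : ℕ) (W : Submodule ℝ V)
    (b : OrthonormalBasis (Fin (2 * m)) ℝ W)
    (lam : Fin m → ℝ)
    (hdiag : ∀ k : Fin m,
      ω (b ⟨2 * (k : ℕ), by have := k.isLt; omega⟩ : W)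
        (b ⟨2 * (k : ℕ) + 1, by have := k.isLt; omega⟩ : W) = lam k)
    (hoff : ∀ i j : Fin (2 * m), i < j →
      (¬ ∃ k : Fin m, (i : ℕ) = 2 * (k : ℕ) ∧ (j : ℕ) = 2 * (k : ℕ) + 1) →
      ω (b i : W) (b j : W) = 0) :
    omegaPow m ω (fun i => (b i : W)) = (m.factorial : ℝ) * ∏ k : Fin m, lam k := by
  have hskew (u v : V) : ω u v = -ω v u := by
    rw [hω, hω, real_inner_apply_left_antisymm J hJ2 hJc]
  have hunpaired {x y : Fin m × Fin 2} (hxy : x.1 ≠ y.1) :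
      ¬∃ k : Fin m, (finPairEquiv m x : ℕ) = 2 * k ∧ (finPairEquiv m y : ℕ) = 2 * k + 1 := by
    rintro ⟨k, hx, hy⟩
    simp only [finPairEquiv_apply_val] at hx hy
    exact hxy (Fin.ext (by omega))
  have hblock (x y : Fin m × Fin 2) (hxy : x.1 ≠ y.1) :
      ω (b (finPairEquiv m x)) (b (finPairEquiv m y)) = 0 := by
    rcases lt_or_gt_of_ne ((finPairEquiv m).injective.ne fun h => hxy (congrArg Prod.fst h))
      with hlt | hgt
    · exact hoff _ _ hlt (hunpaired hxy)
    · rw [hskew, hoff _ _ hgt (hunpaired hxy.symm), neg_zero]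
  rw [omegaPow_eq_factorial_mul_prod_of_blockDiagonal _ _ hblock fun k => hskew _ _]
  simp only [finPairEquiv_apply_zero, finPairEquiv_apply_one, hdiag]
end
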